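/- arXiv:1608.05518 — 5 statements merged into one kernel-verified Lean document; each statement's English description precedes it below -/
import Mathlib

section
/- Let point pairs (x_i, y_i) ∈ ℝ² × ℝ², i = 1, …, m, be given. Suppose P₁ = (I 0) (the 3×4 matrix whose left 3×3 block is the identity and last column is zero) and P₂ = (A b) is a 3×4 real matrix of rank 3 with A ∈ ℝ^{3×3}, b ∈ ℝ³. Suppose there is a subset σ ⊆ {1,…,m} and vectors v_i ∈ ℝ³ such that: for every i ∈ σ, v_i ≠ 0 and P₁(v_i,0)ᵀ is a nonzero scalar multiple of x̂_i and P₂(v_i,0)ᵀ is a nonzero scalar multiple of ŷ_i; and for every i ∉ σ, P₁ v̂_i is a nonzero scalar multiple of x̂_i and P₂ v̂_i is a nonzero scalar multiple of ŷ_i. Then there exist a finite camera P₂' and points v_i' ∈ ℝ³ such that for all i, P₁ v̂_i' is a nonzero scalar multiple of x̂_i and P₂' v̂_i' is a nonzero scalar multiple of ŷ_i. -/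
open Matrix

noncomputable section

/-- For `u ∈ ℝⁿ`, `hat u = (u, 1)ᵀ ∈ ℝⁿ⁺¹`. -/
def hat {n : ℕ} (u : Fin n → ℝ) : Fin (n + 1) → ℝ := Fin.snoc u 1

/-- The 3×4 matrix `(A b)` with left 3×3 block `A` and last column `b`. -/
def cam (A : Matrix (Fin 3) (Fin 3) ℝ) (b : Fin 3 → ℝ) : Matrix (Fin 3) (Fin 4) ℝ :=
  Matrix.of fun i => Fin.snoc (A i) (b i)

/-- The left 3×3 block of a 3×4 matrix. -/
def leftBlock (P : Matrix (Fin 3) (Fin 4) ℝ) : Matrix (Fin 3) (Fin 3) ℝ :=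
  P.submatrix id Fin.castSucc

/-- A (projective) camera is a real 3×4 matrix of rank 3. -/
def IsCamera (P : Matrix (Fin 3) (Fin 4) ℝ) : Prop := P.rank = 3

/-- A finite camera: the left 3×3 block is nonsingular. -/
def IsFiniteCamera (P : Matrix (Fin 3) (Fin 4) ℝ) : Prop := IsUnit (leftBlock P).det

/-- Two cameras are coincident if their camera centers agree up to a nonzero scale;
for rank-3 cameras the center is the (one-dimensional) kernel, so this says the two
cameras share a common nonzero kernel vector. -/
def Coincident (P Q : Matrix (Fin 3) (Fin 4) ℝ) : Prop :=
  ∃ c : Fin 4 → ℝ, c ≠ 0 ∧ P.mulVec c = 0 ∧ Q.mulVec c = 0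

/-- `u` is a nonzero scalar multiple of `v`. -/
def SimEq {n : ℕ} (u v : Fin n → ℝ) : Prop := ∃ c : ℝ, c ≠ 0 ∧ u = c • v

/-- The skew-symmetric matrix `[v]ₓ` with `[v]ₓ w = v × w`. -/
def skew (v : Fin 3 → ℝ) : Matrix (Fin 3) (Fin 3) ℝ :=
  !![0, -v 2, v 1; v 2, 0, -v 0; -v 1, v 0, 0]

/-- `(x, y)` is `(A, b)`-irregular. -/
def Irregular (A : Matrix (Fin 3) (Fin 3) ℝ) (b : Fin 3 → ℝ) (x y : Fin 2 → ℝ) : Prop :=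
  ((skew b * A).mulVec (hat x) = 0 ∧ Matrix.vecMul (hat y) (skew b) ≠ 0) ∨
  ((skew b * A).mulVec (hat x) ≠ 0 ∧ Matrix.vecMul (hat y) (skew b) = 0)

/-!
Transform the reconstruction by the projective map `H = [[I, 0], [tᵀ, 1]]`. Since
`(I 0) H = (I 0)`, the first camera is unchanged, the second becomes `(A + b tᵀ, b)`, and the
scene point `(vᵢ, sᵢ)` (with `sᵢ = 0` at infinity, `sᵢ = 1` otherwise) becomes
`H⁻¹ (vᵢ, sᵢ) = (vᵢ, sᵢ - t ⬝ vᵢ)`, which is finite iff `t ⬝ vᵢ ≠ sᵢ`. These conditions and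
`det (A + b tᵀ) ≠ 0` each say that a polynomial in `t` does not vanish, and none of these
polynomials is identically zero (for the determinant because `P₂` has rank 3), so a generic
`t` satisfies all of them.
-/

lemma exists_dotProduct_ne {R ι : Type*} [Semiring R] [Fintype ι] {u : ι → R} {s : R}
    (h : u ≠ 0 ∨ s ≠ 0) : ∃ t : ι → R, t ⬝ᵥ u ≠ s := by
  classical
  by_contra! ht
  have hs : s = 0 := by rw [← ht 0, zero_dotProduct]
  have hu : u = 0 := funext fun j => by
    rw [Pi.zero_apply, ← one_mul (u j), ← single_dotProduct, ht, hs]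
  tauto

theorem MvPolynomial.exists_forall_eval_ne_zero {R σ ι : Type*} [CommRing R] [IsDomain R]
    [Infinite R] [Fintype ι] (p : ι → MvPolynomial σ R) (hp : ∀ i, ∃ x, eval x (p i) ≠ 0) :
    ∃ x, ∀ i, eval x (p i) ≠ 0 := by
  have hprod : ∏ i, p i ≠ 0 := Finset.prod_ne_zero_iff.mpr fun i _ h0 => by
    obtain ⟨x, hx⟩ := hp i
    exact hx (by rw [h0, map_zero])
  obtain ⟨x, hx⟩ : ∃ x, eval x (∏ i, p i) ≠ 0 := by
    by_contra! h
    exact hprod (funext fun x => by rw [h x, map_zero])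
  rw [map_prod] at hx
  exact ⟨x, fun i => Finset.prod_ne_zero_iff.mp hx i (Finset.mem_univ i)⟩

lemma cam_mulVec_snoc (A : Matrix (Fin 3) (Fin 3) ℝ) (b w : Fin 3 → ℝ) (s : ℝ) :
    cam A b *ᵥ Fin.snoc w s = A *ᵥ w + s • b := by
  ext i
  simp only [mulVec, dotProduct, Fin.sum_univ_castSucc, cam, of_apply, Fin.snoc_castSucc,
    Fin.snoc_last]
  simp [mulVec, dotProduct, Fin.sum_univ_succ, mul_comm, add_assoc]

lemma leftBlock_cam (A : Matrix (Fin 3) (Fin 3) ℝ) (b : Fin 3 → ℝ) :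
    leftBlock (cam A b) = A := by
  ext i j
  simp [leftBlock, cam]

lemma cam_one_zero_mulVec_snoc (w : Fin 3 → ℝ) (s : ℝ) : cam 1 0 *ᵥ Fin.snoc w s = w := by
  rw [cam_mulVec_snoc, one_mulVec, smul_zero, add_zero]

lemma exists_det_add_vecMulVec_ne_zero {A : Matrix (Fin 3) (Fin 3) ℝ} {b : Fin 3 → ℝ}
    (hP : IsCamera (cam A b)) : ∃ t, (A + vecMulVec b t).det ≠ 0 := by
  have hker : Module.finrank ℝ (LinearMap.ker (cam A b).mulVecLin) = 1 := by
    have := LinearMap.finrank_range_add_finrank_ker (cam A b).mulVecLin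
    rw [show Module.finrank ℝ (LinearMap.range (cam A b).mulVecLin) = 3 from hP] at this
    simp only [Module.finrank_fintype_fun_eq_card, Fintype.card_fin] at this
    omega
  obtain ⟨c, hc0, hspan⟩ := finrank_eq_one_iff'.mp hker
  -- With `c = (u, r)` spanning the kernel, any `t` with `t ⬝ u ≠ r` works.
  obtain ⟨t, ht⟩ :=
    exists_dotProduct_ne (u := Fin.init (c : Fin 4 → ℝ)) (s := (c : Fin 4 → ℝ) (Fin.last 3))
    (by
      by_contra! h
      exact hc0 (Subtype.ext (funext fun j => Fin.lastCases h.2 (fun j => congrFun h.1 j) j)))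
  refine ⟨t, fun hdet => ?_⟩
  obtain ⟨w, hw0, hw⟩ := exists_mulVec_eq_zero_iff.mpr hdet
  rw [add_mulVec, vecMulVec_mulVec, op_smul_eq_smul] at hw
  have hmem : Fin.snoc w (t ⬝ᵥ w) ∈ LinearMap.ker (cam A b).mulVecLin := by
    rwa [LinearMap.mem_ker, mulVecLin_apply, cam_mulVec_snoc]
  obtain ⟨μ, hμ⟩ := hspan ⟨_, hmem⟩
  have hμc : μ • (c : Fin 4 → ℝ) = Fin.snoc w (t ⬝ᵥ w) := congrArg Subtype.val hμ
  have hw : w = μ • Fin.init (c : Fin 4 → ℝ) := by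
    funext j
    simpa [Fin.init] using (congrFun hμc j.castSucc).symm
  have hlast : μ * (c : Fin 4 → ℝ) (Fin.last 3) = t ⬝ᵥ w := by
    simpa only [Pi.smul_apply, smul_eq_mul, Fin.snoc_last] using congrFun hμc (Fin.last 3)
  rw [hw, dotProduct_smul, smul_eq_mul] at hlast
  have hμ0 : μ = 0 := by
    by_contra hμ0
    exact ht (mul_left_cancel₀ hμ0 hlast).symm
  exact hw0 (by rw [hw, hμ0, zero_smul])

open MvPolynomial in
lemma exists_det_add_vecMulVec_ne_zero_and_dotProduct_ne {ι : Type*} [Fintype ι]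
    {A : Matrix (Fin 3) (Fin 3) ℝ} {b : Fin 3 → ℝ} (hP : IsCamera (cam A b))
    (w : ι → Fin 3 → ℝ) (s : ι → ℝ) (hws : ∀ i, w i ≠ 0 ∨ s i ≠ 0) :
    ∃ t, (A + vecMulVec b t).det ≠ 0 ∧ ∀ i, t ⬝ᵥ w i ≠ s i := by
  let D : MvPolynomial (Fin 3) ℝ := (A.map C + vecMulVec (fun i => C (b i)) X).det
  let ℓ : ι → MvPolynomial (Fin 3) ℝ := fun i => ∑ j, X j * C (w i j) - C (s i)
  have eval_D (t : Fin 3 → ℝ) : eval t D = (A + vecMulVec b t).det := by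
    rw [RingHom.map_det]
    congr 1
    ext i j
    simp [vecMulVec]
  have eval_ℓ (i : ι) (t : Fin 3 → ℝ) : eval t (ℓ i) = t ⬝ᵥ w i - s i := by
    simp [ℓ, dotProduct]
  obtain ⟨t, ht⟩ := exists_forall_eval_ne_zero (fun o : Option ι => o.elim D ℓ) <|
    Option.forall.mpr
      ⟨by simpa [eval_D] using exists_det_add_vecMulVec_ne_zero hP,
       fun i => by simpa [eval_ℓ, sub_ne_zero] using exists_dotProduct_ne (hws i)⟩
  obtain ⟨hD, hℓ⟩ := Option.forall.mp ht
  exact ⟨t, by simpa [eval_D] using hD, fun i => by simpa [eval_ℓ, sub_ne_zero] using hℓ i⟩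

lemma cam_add_vecMulVec_mulVec_hat_smul (A : Matrix (Fin 3) (Fin 3) ℝ) (b t w : Fin 3 → ℝ)
    {s : ℝ} (h : t ⬝ᵥ w ≠ s) :
    cam (A + vecMulVec b t) b *ᵥ hat ((s - t ⬝ᵥ w)⁻¹ • w) =
      (s - t ⬝ᵥ w)⁻¹ • (cam A b *ᵥ Fin.snoc w s) := by
  have hc : (s - t ⬝ᵥ w)⁻¹ * (t ⬝ᵥ w) + 1 = (s - t ⬝ᵥ w)⁻¹ * s := by
    field_simp [sub_ne_zero.mpr h.symm]
    ring
  rw [hat, cam_mulVec_snoc, cam_mulVec_snoc, add_mulVec, vecMulVec_mulVec, op_smul_eq_smul,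
    dotProduct_smul, smul_eq_mul, mulVec_smul, smul_add, smul_smul, ← hc, add_smul, add_assoc]

lemma SimEq.smul_left {n : ℕ} {u v : Fin n → ℝ} (h : SimEq u v) {c : ℝ} (hc : c ≠ 0) :
    SimEq (c • u) v := by
  obtain ⟨d, hd, rfl⟩ := h
  exact ⟨c * d, mul_ne_zero hc hd, smul_smul c d v⟩

/-- Lemma: a projective reconstruction with first camera `(I 0)` (where some scene points
may be at infinity) can be replaced by a finite reconstruction with the same first camera. -/
theorem stmt1 (m : ℕ) (x y : Fin m → Fin 2 → ℝ)
    (A : Matrix (Fin 3) (Fin 3) ℝ) (b : Fin 3 → ℝ)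
    (hP2 : IsCamera (cam A b))
    (σ : Finset (Fin m)) (v : Fin m → Fin 3 → ℝ)
    (hσ : ∀ i ∈ σ, v i ≠ 0 ∧
      SimEq ((cam 1 0).mulVec (Fin.snoc (v i) 0)) (hat (x i)) ∧
      SimEq ((cam A b).mulVec (Fin.snoc (v i) 0)) (hat (y i)))
    (hσc : ∀ i ∉ σ,
      SimEq ((cam 1 0).mulVec (hat (v i))) (hat (x i)) ∧
      SimEq ((cam A b).mulVec (hat (v i))) (hat (y i))) :
    ∃ (P₂' : Matrix (Fin 3) (Fin 4) ℝ) (v' : Fin m → Fin 3 → ℝ),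
      IsFiniteCamera P₂' ∧ ∀ i,
        SimEq ((cam 1 0).mulVec (hat (v' i))) (hat (x i)) ∧
        SimEq (P₂'.mulVec (hat (v' i))) (hat (y i)) := by
  classical
  let s : Fin m → ℝ := fun i => if i ∈ σ then 0 else 1
  have hv (i : Fin m) : SimEq (v i) (hat (x i)) ∧
      SimEq (cam A b *ᵥ Fin.snoc (v i) (s i)) (hat (y i)) := by
    by_cases hi : i ∈ σ
    · simpa [s, hi, cam_one_zero_mulVec_snoc] using (hσ i hi).2
    · simpa [s, hi, hat, cam_one_zero_mulVec_snoc] using hσc i hi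
  have hvs (i : Fin m) : v i ≠ 0 ∨ s i ≠ 0 := by
    by_cases hi : i ∈ σ
    · exact .inl (hσ i hi).1
    · exact .inr (by simp [s, hi])
  obtain ⟨t, hdet, ht⟩ := exists_det_add_vecMulVec_ne_zero_and_dotProduct_ne hP2 v s hvs
  refine ⟨cam (A + vecMulVec b t) b, fun i => (s i - t ⬝ᵥ v i)⁻¹ • v i, ?_, fun i => ?_⟩
  · rw [IsFiniteCamera, leftBlock_cam]
    exact hdet.isUnit
  have hc : (s i - t ⬝ᵥ v i)⁻¹ ≠ 0 := inv_ne_zero (sub_ne_zero.mpr (ht i).symm)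
  rw [hat, cam_one_zero_mulVec_snoc, ← hat, cam_add_vecMulVec_mulVec_hat_smul A b t _ (ht i)]
  exact ⟨(hv i).1.smul_left hc, (hv i).2.smul_left hc⟩
end
end

section
/- Let (x_i, y_i) ∈ ℝ² × ℝ², i = 1,…,m, be given. The following four statements are equivalent: (1) there exist cameras P₁, P₂ and points w_i ∈ ℝ⁴∖{0} such that (P₁,P₂,{w_i}) is a reconstruction of {(x_i,y_i)}; (2) there exist finite cameras P₁, P₂ and points w_i ∈ ℝ⁴∖{0} forming a reconstruction; (3) there exist finite cameras P₁, P₂ and points w_i ∈ ℝ³ such that (P₁,P₂,{ŵ_i}) is a reconstruction; (4) there exist a finite camera P₂ and points w_i ∈ ℝ³ such that (P₁,P₂,{ŵ_i}) is a reconstruction with P₁ = (I 0), the 3×4 matrix with identity left block and zero last column. -/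
open Matrix

noncomputable section

/-!
Only (1) ⇒ (4) needs an argument. Choose a row `r ∈ ℝ⁴` with `r · z ≠ 0` for the centres `c₁`, `c₂`
of `P₁`, `P₂` and for every `wᵢ`: a vector space over an infinite field is not a finite union of
hyperplanes. Then `G = (P₁; r)` is invertible, each `G wᵢ = (P₁ wᵢ, r · wᵢ)` rescales to some `ûᵢ`,
the first camera becomes `P₁ G⁻¹ = (I 0)`, and the second one, `P₂ G⁻¹`, has the centre `G c₂`,
whose last coordinate `r · c₂` is nonzero, so it is a finite camera.
-/

theorem Matrix.exists_dotProduct_ne_zero {ι K n : Type*} [Field K] [Infinite K] [Finite ι]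
    [Fintype n] {v : ι → n → K} (hv : ∀ i, v i ≠ 0) : ∃ r : n → K, ∀ i, r ⬝ᵥ v i ≠ 0 := by
  classical
  obtain ⟨f, hf⟩ := Module.exists_dual_forall_apply_ne_zero (K := K) v hv
  set r : n → K := fun j => f (Pi.single j 1)
  refine ⟨r, fun i => ?_⟩
  have hfv : f (v i) = r ⬝ᵥ v i := by
    conv_lhs => rw [pi_eq_sum_univ' (v i)]
    simp [r, dotProduct, mul_comm]
  exact hfv ▸ hf i

theorem Matrix.exists_mulVec_eq_zero_of_card_lt {m n K : Type*} [Field K] [Fintype m]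
    [Fintype n] (A : Matrix m n K) (h : Fintype.card m < Fintype.card n) :
    ∃ v ≠ 0, A *ᵥ v = 0 := by
  obtain ⟨v, hv, hv0⟩ := (Submodule.ne_bot_iff _).1 (LinearMap.ker_ne_bot_of_finrank_lt
    (f := A.mulVecLin) (by simpa using h))
  exact ⟨v, hv0, hv⟩

theorem Matrix.exists_mulVec_eq_and_dotProduct_eq {m n K : Type*} [Field K] [Fintype n]
    {A : Matrix m n K} (hA : Function.Surjective A.mulVec) {c : n → K} (hc : A *ᵥ c = 0)
    {r : n → K} (hrc : r ⬝ᵥ c ≠ 0) (z : m → K) (s : K) :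
    ∃ v, A *ᵥ v = z ∧ r ⬝ᵥ v = s := by
  obtain ⟨v, rfl⟩ := hA z
  refine ⟨v + ((s - r ⬝ᵥ v) / (r ⬝ᵥ c)) • c, ?_, ?_⟩
  · simp [mulVec_add, mulVec_smul, hc]
  · rw [dotProduct_add, dotProduct_smul, smul_eq_mul, div_mul_cancel₀ _ hrc]
    ring

lemma Fin.smul_snoc {M α : Type*} [SMul M α] {n : ℕ} (c : M) (u : Fin n → α) (t : α) :
    c • (Fin.snoc u t : Fin (n + 1) → α) = Fin.snoc (c • u) (c • t) := by
  ext j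
  induction j using Fin.lastCases <;> simp

lemma hat_ne_zero {n : ℕ} (u : Fin n → ℝ) : hat u ≠ 0 :=
  fun h => by simpa [hat] using congrFun h (Fin.last n)

lemma SimEq.trans {n : ℕ} {u v w : Fin n → ℝ} (huv : SimEq u v) (hvw : SimEq v w) :
    SimEq u w := by
  obtain ⟨a, ha, rfl⟩ := huv
  obtain ⟨b, hb, rfl⟩ := hvw
  exact ⟨a * b, mul_ne_zero ha hb, smul_smul a b w⟩

lemma mulVec_snoc_zero (P : Matrix (Fin 3) (Fin 4) ℝ) (u : Fin 3 → ℝ) :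
    P *ᵥ Fin.snoc u 0 = leftBlock P *ᵥ u := by
  ext i
  simp only [mulVec, dotProduct, Fin.sum_univ_castSucc, Fin.snoc_castSucc, Fin.snoc_last,
    mul_zero, add_zero]
  rfl

lemma cam_one_zero_mulVec_hat (u : Fin 3 → ℝ) : cam 1 0 *ᵥ hat u = u := by
  ext i
  simp only [cam, hat, mulVec, dotProduct, of_apply, Fin.sum_univ_castSucc, Fin.snoc_castSucc,
    Fin.snoc_last, Pi.zero_apply, zero_mul, add_zero, one_apply, ite_mul, one_mul,
    Finset.sum_ite_eq, Finset.mem_univ, if_true]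

lemma isFiniteCamera_cam_one_zero : IsFiniteCamera (cam 1 0) := by
  have : leftBlock (cam 1 0) = 1 := by
    ext i j
    simp [leftBlock, cam]
  simp [IsFiniteCamera, this]

lemma isCamera_iff_surjective {P : Matrix (Fin 3) (Fin 4) ℝ} :
    IsCamera P ↔ Function.Surjective P.mulVec := by
  rw [IsCamera, rank, ← coe_mulVecLin, ← LinearMap.range_eq_top]
  refine ⟨fun h => Submodule.eq_top_of_finrank_eq (by simpa using h), fun h => ?_⟩
  rw [h, finrank_top, Module.finrank_fin_fun]

lemma IsFiniteCamera.isCamera {P : Matrix (Fin 3) (Fin 4) ℝ} (hP : IsFiniteCamera P) :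
    IsCamera P := by
  rw [isCamera_iff_surjective]
  intro z
  obtain ⟨u, rfl⟩ := mulVec_surjective_iff_isUnit.2 ((isUnit_iff_isUnit_det _).2 hP) z
  exact ⟨Fin.snoc u 0, mulVec_snoc_zero P u⟩

lemma isFiniteCamera_of_mulVec_eq_zero {P : Matrix (Fin 3) (Fin 4) ℝ}
    (hP : Function.Surjective P.mulVec) {c : Fin 4 → ℝ} (hc : P *ᵥ c = 0)
    (hlast : c (Fin.last 3) ≠ 0) : IsFiniteCamera P := by
  rw [IsFiniteCamera, ← isUnit_iff_isUnit_det, ← mulVec_surjective_iff_isUnit]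
  intro z
  obtain ⟨v, hv, hv_last⟩ := exists_mulVec_eq_and_dotProduct_eq hP hc
    (r := Pi.single (Fin.last 3) 1) (by simpa using hlast) z 0
  rw [single_dotProduct, one_mul] at hv_last
  refine ⟨Fin.init v, ?_⟩
  rw [← mulVec_snoc_zero, ← hv_last, Fin.snoc_init_self, hv]

theorem exists_finiteCamera_reconstruction {m : ℕ} {P₁ P₂ : Matrix (Fin 3) (Fin 4) ℝ}
    (h₁ : IsCamera P₁) (h₂ : IsCamera P₂) {w : Fin m → Fin 4 → ℝ} (hw : ∀ i, w i ≠ 0) :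
    ∃ Q : Matrix (Fin 3) (Fin 4) ℝ, IsFiniteCamera Q ∧ ∃ u : Fin m → Fin 3 → ℝ, ∀ i,
      SimEq (cam 1 0 *ᵥ hat (u i)) (P₁ *ᵥ w i) ∧ SimEq (Q *ᵥ hat (u i)) (P₂ *ᵥ w i) := by
  rw [isCamera_iff_surjective] at h₁ h₂
  obtain ⟨c₁, hc₁0, hc₁⟩ := P₁.exists_mulVec_eq_zero_of_card_lt (by simp)
  obtain ⟨c₂, hc₂0, hc₂⟩ := P₂.exists_mulVec_eq_zero_of_card_lt (by simp)
  obtain ⟨r, hr⟩ := exists_dotProduct_ne_zero (v := Sum.elim w ![c₁, c₂]) <| by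
    rintro (i | j)
    · exact hw i
    · fin_cases j
      exacts [hc₁0, hc₂0]
  have hrw (i : Fin m) : r ⬝ᵥ w i ≠ 0 := hr (.inl i)
  have hrc₁ : r ⬝ᵥ c₁ ≠ 0 := hr (.inr 0)
  have hrc₂ : r ⬝ᵥ c₂ ≠ 0 := hr (.inr 1)
  set G : Matrix (Fin 4) (Fin 4) ℝ := of (Fin.snoc (fun i => P₁ i) r)
  have hG (z : Fin 4 → ℝ) : G *ᵥ z = Fin.snoc (P₁ *ᵥ z) (r ⬝ᵥ z) := by
    ext j
    induction j using Fin.lastCases <;>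
      simp only [G, mulVec, of_apply, Fin.snoc_last, Fin.snoc_castSucc]
  have hG_unit : IsUnit G := mulVec_surjective_iff_isUnit.1 fun z => by
    obtain ⟨v, hv, hrv⟩ :=
      exists_mulVec_eq_and_dotProduct_eq h₁ hc₁ hrc₁ (Fin.init z) (z (Fin.last 3))
    exact ⟨v, by rw [hG, hv, hrv, Fin.snoc_init_self]⟩
  set Q := P₂ * G⁻¹
  have hQG (z : Fin 4 → ℝ) : Q *ᵥ (G *ᵥ z) = P₂ *ᵥ z := by
    rw [mulVec_mulVec, Matrix.mul_assoc, nonsing_inv_mul _ ((isUnit_iff_isUnit_det G).1 hG_unit),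
      Matrix.mul_one]
  have hQ : IsFiniteCamera Q := by
    refine isFiniteCamera_of_mulVec_eq_zero (c := G *ᵥ c₂) (fun z => ?_) (by rw [hQG, hc₂]) ?_
    · obtain ⟨v, rfl⟩ := h₂ z
      exact ⟨G *ᵥ v, hQG v⟩
    · rwa [hG, Fin.snoc_last]
  refine ⟨Q, hQ, fun i => (r ⬝ᵥ w i)⁻¹ • P₁ *ᵥ w i, fun i => ⟨?_, ?_⟩⟩
  · rw [cam_one_zero_mulVec_hat]
    exact ⟨_, inv_ne_zero (hrw i), rfl⟩
  · have hhat : hat ((r ⬝ᵥ w i)⁻¹ • P₁ *ᵥ w i) = (r ⬝ᵥ w i)⁻¹ • G *ᵥ w i := by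
      rw [hG, Fin.smul_snoc, smul_eq_mul, inv_mul_cancel₀ (hrw i)]
      rfl
    rw [hhat, mulVec_smul, hQG]
    exact ⟨_, inv_ne_zero (hrw i), rfl⟩

/-- The four versions of the projective reconstruction problem are equivalent. -/
theorem stmt3 (m : ℕ) (x y : Fin m → Fin 2 → ℝ) :
    List.TFAE
      [ (∃ P₁ P₂ : Matrix (Fin 3) (Fin 4) ℝ, IsCamera P₁ ∧ IsCamera P₂ ∧
          ∃ w : Fin m → Fin 4 → ℝ, ∀ i, w i ≠ 0 ∧
            SimEq (P₁.mulVec (w i)) (hat (x i)) ∧ SimEq (P₂.mulVec (w i)) (hat (y i))),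
        (∃ P₁ P₂ : Matrix (Fin 3) (Fin 4) ℝ, IsFiniteCamera P₁ ∧ IsFiniteCamera P₂ ∧
          ∃ w : Fin m → Fin 4 → ℝ, ∀ i, w i ≠ 0 ∧
            SimEq (P₁.mulVec (w i)) (hat (x i)) ∧ SimEq (P₂.mulVec (w i)) (hat (y i))),
        (∃ P₁ P₂ : Matrix (Fin 3) (Fin 4) ℝ, IsFiniteCamera P₁ ∧ IsFiniteCamera P₂ ∧
          ∃ w : Fin m → Fin 3 → ℝ, ∀ i,
            SimEq (P₁.mulVec (hat (w i))) (hat (x i)) ∧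
            SimEq (P₂.mulVec (hat (w i))) (hat (y i))),
        (∃ P₂ : Matrix (Fin 3) (Fin 4) ℝ, IsFiniteCamera P₂ ∧
          ∃ w : Fin m → Fin 3 → ℝ, ∀ i,
            SimEq ((cam 1 0).mulVec (hat (w i))) (hat (x i)) ∧
            SimEq (P₂.mulVec (hat (w i))) (hat (y i))) ] := by
  tfae_have 1 → 4 := by
    rintro ⟨P₁, P₂, h₁, h₂, w, hw⟩
    obtain ⟨Q, hQ, u, hu⟩ := exists_finiteCamera_reconstruction h₁ h₂ fun i => (hw i).1
    exact ⟨Q, hQ, u, fun i => ⟨(hu i).1.trans (hw i).2.1, (hu i).2.trans (hw i).2.2⟩⟩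
  tfae_have 4 → 3 := fun ⟨P₂, h₂, w, hw⟩ => ⟨cam 1 0, P₂, isFiniteCamera_cam_one_zero, h₂, w, hw⟩
  tfae_have 3 → 2 := fun ⟨P₁, P₂, h₁, h₂, w, hw⟩ =>
    ⟨P₁, P₂, h₁, h₂, fun i => hat (w i), fun i => ⟨hat_ne_zero _, hw i⟩⟩
  tfae_have 2 → 1 := fun ⟨P₁, P₂, h₁, h₂, w, hw⟩ => ⟨P₁, P₂, h₁.isCamera, h₂.isCamera, w, hw⟩
  tfae_finish
end
end

section
/- Let (x_i, y_i) ∈ ℝ² × ℝ², i = 1,…,m, be given, and let P₁ = (I 0) and P₂ = (A b) be finite cameras (A ∈ ℝ^{3×3} nonsingular, b ∈ ℝ³). If there exist w_i ∈ ℝ³ such that (P₁, P₂, {ŵ_i}) is a reconstruction of {(x_i,y_i)}, then there exists a fundamental matrix associated to {(x_i,y_i)}: a real 3×3 matrix F of rank two satisfying ŷ_iᵀ F x̂_i = 0 for all i = 1,…,m. -/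
open Matrix

noncomputable section

/-!
Take `F = [v]ₓ A` with `v ≠ 0` parallel to `b` (`v = b` unless `b = 0`); it has rank two
since `[v]ₓ` does and `A` is invertible. If `x̂ ∝ w` and `ŷ ∝ A w + b`, then
`ŷ ⬝ F x̂ ∝ (c A x̂ + s v) ⬝ (v × A x̂)`, a combination of two degenerate triple products.
-/

theorem ker_crossProduct {F : Type*} [Field F] {v : Fin 3 → F} (hv : v ≠ 0) :
    LinearMap.ker (crossProduct v) = Submodule.span F {v} := by
  ext u
  rw [LinearMap.mem_ker, Submodule.mem_span_singleton]
  constructor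
  · intro hvu
    by_contra hu
    have hli : LinearIndependent F ![v, u] := by
      rw [LinearIndependent.pair_iff' hv]
      exact fun a ha => hu ⟨a, ha⟩
    exact crossProduct_ne_zero_iff_linearIndependent.mpr hli hvu
  · rintro ⟨a, rfl⟩
    rw [map_smul, cross_self, smul_zero]

theorem skew_mulVec (v u : Fin 3 → ℝ) : skew v *ᵥ u = v ⨯₃ u := by
  funext i
  fin_cases i <;> simp [skew, mulVec, dotProduct, Fin.sum_univ_three, cross_apply] <;> ring

theorem rank_skew {v : Fin 3 → ℝ} (hv : v ≠ 0) : (skew v).rank = 2 := by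
  have hlin : (skew v).mulVecLin = crossProduct v := LinearMap.ext (skew_mulVec v)
  have h := (crossProduct v).finrank_range_add_finrank_ker
  rw [ker_crossProduct hv, finrank_span_singleton hv, Module.finrank_fin_fun] at h
  rw [Matrix.rank, hlin]
  omega

theorem cam_mulVec_hat (A : Matrix (Fin 3) (Fin 3) ℝ) (b u : Fin 3 → ℝ) :
    cam A b *ᵥ hat u = A *ᵥ u + b := by
  funext i
  simp [cam, hat, mulVec, dotProduct, Fin.sum_univ_castSucc]
  rw [show (3 : Fin 4) = Fin.last 3 from rfl, Fin.snoc_last, Fin.snoc_last, mul_one]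

theorem exists_ne_zero_eq_smul {R M : Type*} [Semiring R] [AddCommMonoid M] [Module R M]
    [Nontrivial M] (b : M) : ∃ v : M, v ≠ 0 ∧ ∃ s : R, b = s • v := by
  by_cases hb : b = 0
  · obtain ⟨v, hv⟩ := exists_ne (0 : M)
    exact ⟨v, hv, 0, by rw [hb, zero_smul]⟩
  · exact ⟨b, hb, 1, (one_smul R b).symm⟩

theorem smul_add_smul_dotProduct_cross {R : Type*} [CommRing R] (c s : R) (p v : Fin 3 → R) :
    (c • p + s • v) ⬝ᵥ v ⨯₃ p = 0 := by
  rw [add_dotProduct, smul_dotProduct, smul_dotProduct, dot_cross_self, dot_self_cross,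
    smul_zero, smul_zero, add_zero]

/-- A finite reconstruction with cameras `(I 0)` and `(A b)` yields a fundamental matrix
satisfying the epipolar constraints. -/
theorem stmt7 (m : ℕ) (x y : Fin m → Fin 2 → ℝ)
    (A : Matrix (Fin 3) (Fin 3) ℝ) (b : Fin 3 → ℝ) (hA : IsUnit A.det)
    (w : Fin m → Fin 3 → ℝ)
    (hrec : ∀ i, SimEq ((cam 1 0).mulVec (hat (w i))) (hat (x i)) ∧
                 SimEq ((cam A b).mulVec (hat (w i))) (hat (y i))) :
    ∃ F : Matrix (Fin 3) (Fin 3) ℝ, F.rank = 2 ∧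
      ∀ i, hat (y i) ⬝ᵥ F.mulVec (hat (x i)) = 0 := by
  obtain ⟨v, hv, s, hb⟩ := exists_ne_zero_eq_smul (R := ℝ) b
  refine ⟨skew v * A, by rw [rank_mul_eq_left_of_isUnit_det A _ hA, rank_skew hv], fun i => ?_⟩
  obtain ⟨⟨c, -, hwx⟩, ⟨d, hd, hwy⟩⟩ := hrec i
  rw [cam_mulVec_hat, one_mulVec, add_zero] at hwx
  rw [cam_mulVec_hat, hwx, mulVec_smul, hb] at hwy
  have hconstraint : (d • hat (y i)) ⬝ᵥ (skew v * A) *ᵥ hat (x i) = 0 := by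
    rw [← hwy, ← mulVec_mulVec, skew_mulVec, smul_add_smul_dotProduct_cross]
  rw [smul_dotProduct, smul_eq_zero] at hconstraint
  exact hconstraint.resolve_left hd
end
end

section
/- Let P₁ = (I 0) and P₂ = (A b) be two non-coincident finite cameras (so A ∈ ℝ^{3×3} is nonsingular and b ∈ ℝ³ is nonzero). If (x,y) ∈ ℝ²×ℝ² is (A,b)-irregular, then there is no w ∈ ℝ³ such that P₁ŵ is a nonzero scalar multiple of x̂ and P₂ŵ is a nonzero scalar multiple of ŷ. -/
open Matrix

noncomputable section

lemma cam_mulVec (A : Matrix (Fin 3) (Fin 3) ℝ) (b : Fin 3 → ℝ) (w : Fin 3 → ℝ) :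
    (cam A b).mulVec (hat w) = A.mulVec w + b := by
  funext i
  simp only [Matrix.mulVec, dotProduct, Fin.sum_univ_four, Fin.sum_univ_three, Pi.add_apply]
  show A i 0 * w 0 + A i 1 * w 1 + A i 2 * w 2 + b i * 1 = _
  ring

lemma skew_mulVec_self (b : Fin 3 → ℝ) : (skew b).mulVec b = 0 := by
  funext i
  fin_cases i <;>
    simp [skew, Matrix.mulVec, dotProduct, Fin.sum_univ_three] <;> ring

lemma vecMul_skew_eq (b v : Fin 3 → ℝ) :
    Matrix.vecMul v (skew b) = -((skew b).mulVec v) := by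
  funext i
  fin_cases i <;>
    simp [skew, Matrix.vecMul, Matrix.mulVec, dotProduct, Fin.sum_univ_three] <;> ring

/-- If `(x, y)` is `(A, b)`-irregular, there is no finite reconstruction of `(x, y)` by
the non-coincident finite cameras `(I 0)` and `(A b)`. -/
theorem stmt8 (A : Matrix (Fin 3) (Fin 3) ℝ) (b : Fin 3 → ℝ)
    (hA : IsUnit A.det) (hb : b ≠ 0) (x y : Fin 2 → ℝ)
    (hirr : Irregular A b x y) :
    ¬ ∃ w : Fin 3 → ℝ,
      SimEq ((cam 1 0).mulVec (hat w)) (hat x) ∧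
      SimEq ((cam A b).mulVec (hat w)) (hat y) := by
  rintro ⟨w, ⟨c, hc, h1⟩, ⟨d, hd, h2⟩⟩
  rw [cam_mulVec] at h1 h2
  rw [Matrix.one_mulVec, add_zero] at h1
  have key : c • (skew b * A).mulVec (hat x) = d • (skew b).mulVec (hat y) := by
    have h3 := congrArg (Matrix.mulVec (skew b)) h2
    rw [Matrix.mulVec_add, skew_mulVec_self, add_zero, Matrix.mulVec_smul,
      Matrix.mulVec_mulVec, h1, Matrix.mulVec_smul] at h3
    exact h3
  rcases hirr with ⟨hx0, hy⟩ | ⟨hx, hy0⟩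
  · rw [hx0, smul_zero] at key
    have h4 : (skew b).mulVec (hat y) = 0 := by
      rcases smul_eq_zero.mp key.symm with h | h
      · exact absurd h hd
      · exact h
    exact hy (by rw [vecMul_skew_eq, h4, neg_zero])
  · have h4 : (skew b).mulVec (hat y) = 0 := by
      have := hy0
      rw [vecMul_skew_eq, neg_eq_zero] at this
      exact this
    rw [h4, smul_zero] at key
    rcases smul_eq_zero.mp key with h | h
    · exact absurd h hc
    · exact hx h
end
end

section
/- Let P₁ = (I 0) and P₂ = (A b) be non-coincident finite cameras (A ∈ ℝ^{3×3} nonsingular, b ∈ ℝ³ nonzero) and set F = [b]_× A. Then F has rank two, A⁻¹b is a nonzero vector spanning the right kernel of F (i.e., F(A⁻¹b) = 0), and b is a nonzero vector spanning the left kernel of F (i.e., Fᵀ b = 0). -/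
open Matrix

noncomputable section

lemma skew_mulVec_s16 (b w : Fin 3 → ℝ) :
    (skew b).mulVec w = ![b 1 * w 2 - b 2 * w 1, b 2 * w 0 - b 0 * w 2, b 0 * w 1 - b 1 * w 0] := by
  funext i
  fin_cases i <;>
    simp [skew, Matrix.mulVec, dotProduct, Fin.sum_univ_three] <;> ring

lemma cross_zero {b w : Fin 3 → ℝ} (hb : b ≠ 0) (h : (skew b).mulVec w = 0) :
    ∃ c : ℝ, w = c • b := by
  rw [skew_mulVec_s16] at h
  have e0 := congrFun h 0
  have e1 := congrFun h 1
  have e2 := congrFun h 2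
  simp at e0 e1 e2
  obtain ⟨i, hi⟩ := Function.ne_iff.mp hb
  simp only [Pi.zero_apply] at hi
  fin_cases i
  · have h0 : b 0 ≠ 0 := hi
    refine ⟨w 0 / b 0, ?_⟩
    funext j; fin_cases j <;> simp <;> rw [div_mul_eq_mul_div, eq_div_iff h0] <;> linarith
  · have h0 : b 1 ≠ 0 := hi
    refine ⟨w 1 / b 1, ?_⟩
    funext j; fin_cases j <;> simp <;> rw [div_mul_eq_mul_div, eq_div_iff h0] <;> linarith
  · have h0 : b 2 ≠ 0 := hi
    refine ⟨w 2 / b 2, ?_⟩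
    funext j; fin_cases j <;> simp <;> rw [div_mul_eq_mul_div, eq_div_iff h0] <;> linarith

/-- For non-coincident finite cameras `(I 0)` and `(A b)`, the matrix `F = [b]ₓ A` has
rank two, `A⁻¹ b` is a nonzero vector spanning its right kernel, and `b` is a nonzero
vector spanning its left kernel. -/
theorem stmt16 (A : Matrix (Fin 3) (Fin 3) ℝ) (b : Fin 3 → ℝ)
    (hA : IsUnit A.det) (hb : b ≠ 0) :
    (skew b * A).rank = 2 ∧
    A⁻¹.mulVec b ≠ 0 ∧
    (skew b * A).mulVec (A⁻¹.mulVec b) = 0 ∧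
    (∀ v : Fin 3 → ℝ, (skew b * A).mulVec v = 0 → ∃ c : ℝ, v = c • A⁻¹.mulVec b) ∧
    (skew b * A)ᵀ.mulVec b = 0 ∧
    (∀ v : Fin 3 → ℝ, (skew b * A)ᵀ.mulVec v = 0 → ∃ c : ℝ, v = c • b) := by
  have hAinv : A * A⁻¹ = 1 := Matrix.mul_nonsing_inv A hA
  have hinvA : A⁻¹ * A = 1 := Matrix.nonsing_inv_mul A hA
  have hu : A.mulVec (A⁻¹.mulVec b) = b := by
    rw [Matrix.mulVec_mulVec, hAinv, Matrix.one_mulVec]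
  have hne : A⁻¹.mulVec b ≠ 0 := by
    intro h0
    apply hb
    rw [← hu, h0, Matrix.mulVec_zero]
  have hFu : (skew b * A).mulVec (A⁻¹.mulVec b) = 0 := by
    rw [← Matrix.mulVec_mulVec, hu, skew_mulVec_self]
  have hker : ∀ v : Fin 3 → ℝ, (skew b * A).mulVec v = 0 → ∃ c : ℝ, v = c • A⁻¹.mulVec b := by
    intro v hv
    rw [← Matrix.mulVec_mulVec] at hv
    obtain ⟨c, hc⟩ := cross_zero hb hv
    refine ⟨c, ?_⟩
    have : A⁻¹.mulVec (A.mulVec v) = A⁻¹.mulVec (c • b) := by rw [hc]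
    rwa [Matrix.mulVec_mulVec, hinvA, Matrix.one_mulVec, Matrix.mulVec_smul] at this
  have hAt : IsUnit Aᵀ.det := by rwa [Matrix.det_transpose]
  have hskewT : (skew b)ᵀ = -skew b := by
    funext i j; fin_cases i <;> fin_cases j <;> simp [skew]
  have hT : ∀ v : Fin 3 → ℝ, (skew b * A)ᵀ.mulVec v = Aᵀ.mulVec (-(skew b).mulVec v) := by
    intro v
    rw [Matrix.transpose_mul, ← Matrix.mulVec_mulVec, hskewT, Matrix.neg_mulVec]
  have hAtinj : ∀ x : Fin 3 → ℝ, Aᵀ.mulVec x = 0 → x = 0 := by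
    intro x hx
    have : (Aᵀ)⁻¹.mulVec (Aᵀ.mulVec x) = 0 := by rw [hx, Matrix.mulVec_zero]
    rwa [Matrix.mulVec_mulVec, Matrix.nonsing_inv_mul _ hAt, Matrix.one_mulVec] at this
  have hFtb : (skew b * A)ᵀ.mulVec b = 0 := by
    rw [hT, skew_mulVec_self, neg_zero, Matrix.mulVec_zero]
  have hlker : ∀ v : Fin 3 → ℝ, (skew b * A)ᵀ.mulVec v = 0 → ∃ c : ℝ, v = c • b := by
    intro v hv
    rw [hT] at hv
    have := hAtinj _ hv
    have h2 : (skew b).mulVec v = 0 := by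
      have := congrArg Neg.neg this
      simpa using this
    exact cross_zero hb h2
  refine ⟨?_, hne, hFu, hker, hFtb, hlker⟩
  -- rank computation
  have hkerEq : LinearMap.ker (skew b * A).mulVecLin = ℝ ∙ (A⁻¹.mulVec b) := by
    ext v
    simp only [LinearMap.mem_ker, Matrix.mulVecLin_apply, Submodule.mem_span_singleton]
    constructor
    · intro hv
      obtain ⟨c, hc⟩ := hker v hv
      exact ⟨c, hc.symm⟩
    · rintro ⟨c, rfl⟩
      rw [Matrix.mulVec_smul, hFu, smul_zero]
  have hkerdim : Module.finrank ℝ (LinearMap.ker (skew b * A).mulVecLin) = 1 := by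
    rw [hkerEq]
    exact finrank_span_singleton hne
  have hrn := LinearMap.finrank_range_add_finrank_ker (skew b * A).mulVecLin
  have hdim : Module.finrank ℝ (Fin 3 → ℝ) = 3 := by simp
  rw [hdim, hkerdim] at hrn
  have : (skew b * A).rank = Module.finrank ℝ (LinearMap.range (skew b * A).mulVecLin) := rfl
  omega
end
end
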